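/- arXiv:2410.09965 — 9 statements merged into one kernel-verified Lean document; each statement's English description precedes it below -/
import Mathlib

section
/- Every finite weighted graph admits a stable b-matching: for every finite simple graph G with positive edge weights ω, capacities b, and strict linear order ≺ on edges refining ω, there exists a b-matching M of G that is stable. -/
/-!
Framework: finite simple graph `G` on vertex set `V`, positive edge weights `ω` on
unordered pairs of distinct vertices, capacities `b`, and a strict linear order
`prec` on unordered pairs of distinct vertices refining `ω`
(the paper's tie-breaking rule).  `M` is a set of edges.
-/

variable {V : Type*} [Fintype V] [DecidableEq V]

/-- Number of edges of `M` incident to vertex `u`. -/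
def bDeg (M : Finset (Sym2 V)) (u : V) : ℕ :=
  (M.filter (fun e => u ∈ e)).card

/-- `u` is saturated in `M`: it is incident to exactly `b u` edges of `M`. -/
def Saturated (b : V → ℕ) (M : Finset (Sym2 V)) (u : V) : Prop :=
  bDeg M u = b u

/-- `M` is a `b`-matching of `G`: a set of edges of `G` such that every vertex `u`
is incident to at most `b u` edges of `M`. -/
def IsBMatching (G : SimpleGraph V) (b : V → ℕ) (M : Finset (Sym2 V)) : Prop :=
  (∀ e ∈ M, e ∈ G.edgeSet) ∧ ∀ u : V, bDeg M u ≤ b u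

/-- `M` is a stable `b`-matching of `G` (termination condition of the b-suitor
algorithm): for every non-matching edge `e` of `G` there is an endpoint `x` of `e`
which is saturated and all of whose matched edges beat `e` in the order `prec`. -/
def IsStable (G : SimpleGraph V) (b : V → ℕ) (prec : Sym2 V → Sym2 V → Prop)
    (M : Finset (Sym2 V)) : Prop :=
  IsBMatching G b M ∧
    ∀ e ∈ G.edgeSet, e ∉ M →
      ∃ x ∈ e, Saturated b M x ∧ ∀ f ∈ M, x ∈ f → prec e f

/-- A nonempty finite set with a relation total and transitive on it has a maximum. -/
lemma exists_precMax {α : Type*} [DecidableEq α] (prec : α → α → Prop)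
    (htrans : ∀ e f g : α, prec e f → prec f g → prec e g)
    (E : Finset α) (hne : E.Nonempty)
    (htot : ∀ e ∈ E, ∀ f ∈ E, e ≠ f → prec e f ∨ prec f e) :
    ∃ e ∈ E, ∀ f ∈ E, f ≠ e → prec f e := by
  classical
  induction E using Finset.cons_induction with
  | empty => exact absurd hne (by simp)
  | cons a s ha ih =>
    rcases s.eq_empty_or_nonempty with rfl | hs
    · exact ⟨a, by simp, by simp⟩
    · obtain ⟨m, hm, hmax⟩ := ih hs
        (fun x hx y hy => htot x (Finset.mem_cons_of_mem hx) y (Finset.mem_cons_of_mem hy))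
      have hma : a ≠ m := fun h => ha (h ▸ hm)
      rcases htot a (Finset.mem_cons_self a s) m (Finset.mem_cons_of_mem hm) hma with h1 | h2
      · refine ⟨m, Finset.mem_cons_of_mem hm, ?_⟩
        intro f hf hfm
        rcases Finset.mem_cons.1 hf with rfl | hfs
        · exact h1
        · exact hmax f hfs hfm
      · refine ⟨a, Finset.mem_cons_self a s, ?_⟩
        intro f hf hfa
        rcases Finset.mem_cons.1 hf with rfl | hfs
        · exact absurd rfl hfa
        · by_cases hfm : f = m
          · exact hfm ▸ h2
          · exact htrans _ _ _ (hmax f hfs hfm) h2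

lemma bDeg_insert (M : Finset (Sym2 V)) (e : Sym2 V) (he : e ∉ M) (u : V) :
    bDeg (insert e M) u = if u ∈ e then bDeg M u + 1 else bDeg M u := by
  classical
  unfold bDeg
  rw [Finset.filter_insert]
  split_ifs with h
  · rw [Finset.card_insert_of_notMem (fun hmem => he (Finset.mem_filter.1 hmem).1)]
  · rfl

lemma key_greedy (prec : Sym2 V → Sym2 V → Prop)
    (htrans : ∀ e f g : Sym2 V, prec e f → prec f g → prec e g)
    (htotal : ∀ e f : Sym2 V, ¬ e.IsDiag → ¬ f.IsDiag → e ≠ f → prec e f ∨ prec f e) :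
    ∀ (E : Finset (Sym2 V)), (∀ e ∈ E, ¬ e.IsDiag) → ∀ (b : V → ℕ),
      ∃ M : Finset (Sym2 V), M ⊆ E ∧ (∀ u, bDeg M u ≤ b u) ∧
        ∀ e ∈ E, e ∉ M → ∃ x ∈ e, bDeg M x = b x ∧ ∀ f ∈ M, x ∈ f → prec e f := by
  classical
  intro E
  induction E using Finset.strongInduction with
  | _ E ih =>
    intro hdiag b
    rcases E.eq_empty_or_nonempty with rfl | hne
    · exact ⟨∅, by simp, fun u => by simp [bDeg], by simp⟩
    obtain ⟨e, heE, hmax⟩ := exists_precMax prec htrans E hne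
      (fun x hx y hy => htotal x y (hdiag x hx) (hdiag y hy))
    have hsub : E.erase e ⊂ E := Finset.erase_ssubset heE
    have hdiag' : ∀ f ∈ E.erase e, ¬ f.IsDiag :=
      fun f hf => hdiag f (Finset.mem_of_mem_erase hf)
    by_cases hcap : ∃ x ∈ e, b x = 0
    · obtain ⟨x, hxe, hbx⟩ := hcap
      obtain ⟨M, hME, hle, hstab⟩ := ih _ hsub hdiag' b
      refine ⟨M, hME.trans (Finset.erase_subset _ _), hle, ?_⟩
      intro f hf hfM
      by_cases hfe : f = e
      · subst hfe
        have hdeg0 : bDeg M x = 0 := Nat.le_antisymm (hbx ▸ hle x) (Nat.zero_le _)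
        refine ⟨x, hxe, hdeg0.trans hbx.symm, ?_⟩
        intro g hg hxg
        exfalso
        have hmem : g ∈ M.filter (fun e => x ∈ e) := Finset.mem_filter.2 ⟨hg, hxg⟩
        have := Finset.card_eq_zero.1 hdeg0
        rw [bDeg] at hdeg0
        simp [Finset.card_eq_zero.1 hdeg0] at hmem
      · exact hstab f (Finset.mem_erase.2 ⟨hfe, hf⟩) hfM
    · push_neg at hcap
      set b' : V → ℕ := fun u => if u ∈ e then b u - 1 else b u with hb'
      obtain ⟨M, hME, hle, hstab⟩ := ih _ hsub hdiag' b'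
      have heM : e ∉ M := fun h => (Finset.mem_erase.1 (hME h)).1 rfl
      have hdegins : ∀ u, bDeg (insert e M) u =
          if u ∈ e then bDeg M u + 1 else bDeg M u := bDeg_insert M e heM
      refine ⟨insert e M, ?_, ?_, ?_⟩
      · intro g hg
        rcases Finset.mem_insert.1 hg with rfl | hgM
        · exact heE
        · exact Finset.mem_of_mem_erase (hME hgM)
      · intro u
        rw [hdegins u]
        split_ifs with hu
        · have h1 : bDeg M u ≤ b u - 1 := by simpa [hb', hu] using hle u
          have h2 : 1 ≤ b u := Nat.one_le_iff_ne_zero.2 (hcap u hu)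
          omega
        · simpa [hb', hu] using hle u
      · intro f hfE hfM
        have hfe : f ≠ e := fun h => hfM (h ▸ Finset.mem_insert_self e M)
        have hfM' : f ∉ M := fun h => hfM (Finset.mem_insert_of_mem h)
        obtain ⟨x, hxf, hsat, hprec⟩ := hstab f (Finset.mem_erase.2 ⟨hfe, hfE⟩) hfM'
        refine ⟨x, hxf, ?_, ?_⟩
        · rw [hdegins x]
          split_ifs with hxe
          · have h2 : 1 ≤ b x := Nat.one_le_iff_ne_zero.2 (hcap x hxe)
            have : bDeg M x = b x - 1 := by simpa [hb', hxe] using hsat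
            omega
          · simpa [hb', hxe] using hsat
        · intro g hg hxg
          rcases Finset.mem_insert.1 hg with rfl | hgM
          · exact hmax f hfE hfe
          · exact hprec g hgM hxg

/-- Every finite weighted graph admits a stable b-matching. -/
theorem stable_bMatching_exists
    (G : SimpleGraph V) (ω : Sym2 V → ℝ) (b : V → ℕ)
    (prec : Sym2 V → Sym2 V → Prop)
    (hω : ∀ e : Sym2 V, ¬ e.IsDiag → 0 < ω e)
    (hirr : ∀ e : Sym2 V, ¬ prec e e)
    (htrans : ∀ e f g : Sym2 V, prec e f → prec f g → prec e g)
    (htotal : ∀ e f : Sym2 V, ¬ e.IsDiag → ¬ f.IsDiag → e ≠ f → prec e f ∨ prec f e)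
    (href : ∀ e f : Sym2 V, ¬ e.IsDiag → ¬ f.IsDiag → ω e < ω f → prec e f) :
    ∃ M : Finset (Sym2 V), IsStable G b prec M := by
  classical
  obtain ⟨M, hME, hle, hstab⟩ := key_greedy prec htrans htotal G.edgeFinset
    (fun e he => SimpleGraph.not_isDiag_of_mem_edgeSet G
      (SimpleGraph.mem_edgeFinset.1 he)) b
  refine ⟨M, ⟨⟨fun e he => SimpleGraph.mem_edgeFinset.1 (hME he), hle⟩, ?_⟩⟩
  intro e he heM
  obtain ⟨x, hxe, hsat, hprec⟩ := hstab e (SimpleGraph.mem_edgeFinset.2 he) heM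
  exact ⟨x, hxe, hsat, hprec⟩
end

section
/- The stable b-matching of a finite weighted graph is unique: if M₁ and M₂ are both stable b-matchings of G (with respect to the same weights ω, capacities b, and strict linear order ≺ refining ω), then M₁ = M₂. -/
/-!
Compare two stable `b`-matchings `M₁ ≠ M₂` at a `prec`-maximal edge `e` of their symmetric
difference, say `e ∈ M₁ \ M₂`. Stability of `M₂` gives an endpoint `x` of `e`, saturated in `M₂`,
whose `M₂`-edges all beat `e`; by maximality of `e` these edges lie in `M₁` as well. Together with
`e` itself, `x` then has more edges in `M₁` than its capacity `b x` allows.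
-/

variable {V : Type*} [Fintype V] [DecidableEq V]

lemma Finset.exists_forall_not_rel_of_trans_of_irrefl {α : Type*} [Finite α]
    (r : α → α → Prop) (hirr : ∀ a, ¬ r a a) (htrans : ∀ a b c, r a b → r b c → r a c)
    {s : Finset α} (hs : s.Nonempty) :
    ∃ a ∈ s, ∀ b ∈ s, ¬ r a b := by
  have : IsTrans α (flip r) := ⟨fun a b c hba hcb => htrans c b a hcb hba⟩
  have : Std.Irrefl (flip r) := ⟨hirr⟩
  exact (Finite.wellFounded_of_trans_of_irrefl (flip r)).has_min s hs

omit [Fintype V] in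
lemma IsStable.exists_prec_of_mem_sdiff {G : SimpleGraph V} {b : V → ℕ}
    {prec : Sym2 V → Sym2 V → Prop} {M₁ M₂ : Finset (Sym2 V)}
    (h₁ : IsBMatching G b M₁) (h₂ : IsStable G b prec M₂) {e : Sym2 V} (he : e ∈ M₁ \ M₂) :
    ∃ f ∈ M₂ \ M₁, prec e f := by
  rw [Finset.mem_sdiff] at he
  obtain ⟨x, hxe, hsat, hbeats⟩ := h₂.2 e (h₁.1 e he.1) he.2
  by_contra! hnone
  have hsub : M₂.filter (x ∈ ·) ⊂ M₁.filter (x ∈ ·) := by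
    refine Finset.ssubset_iff_subset_ne.mpr ⟨fun f hf => ?_, fun heq => ?_⟩
    · rw [Finset.mem_filter] at hf ⊢
      by_contra hf₁
      exact hnone f (Finset.mem_sdiff.mpr ⟨hf.1, fun h => hf₁ ⟨h, hf.2⟩⟩) (hbeats f hf.1 hf.2)
    · have : e ∈ M₂.filter (x ∈ ·) := heq ▸ Finset.mem_filter.mpr ⟨he.1, hxe⟩
      exact he.2 (Finset.mem_filter.mp this).1
  have hlt : bDeg M₂ x < bDeg M₁ x := Finset.card_lt_card hsub
  have hle : bDeg M₁ x ≤ b x := h₁.2 x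
  rw [Saturated] at hsat
  omega

theorem stable_bMatching_unique_general
    (G : SimpleGraph V) (b : V → ℕ)
    (prec : Sym2 V → Sym2 V → Prop)
    (hirr : ∀ e : Sym2 V, ¬ prec e e)
    (htrans : ∀ e f g : Sym2 V, prec e f → prec f g → prec e g)
    (M₁ M₂ : Finset (Sym2 V))
    (h₁ : IsStable G b prec M₁) (h₂ : IsStable G b prec M₂) :
    M₁ = M₂ := by
  by_contra hne
  obtain ⟨e, he, hmax⟩ := Finset.exists_forall_not_rel_of_trans_of_irrefl prec hirr htrans
    (Finset.symmDiff_nonempty.mpr hne)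
  rcases Finset.mem_symmDiff.mp he with he₁ | he₂
  · obtain ⟨f, hf, hef⟩ := h₂.exists_prec_of_mem_sdiff h₁.1 (Finset.mem_sdiff.mpr he₁)
    exact hmax f (Finset.mem_symmDiff.mpr (Or.inr (Finset.mem_sdiff.mp hf))) hef
  · obtain ⟨f, hf, hef⟩ := h₁.exists_prec_of_mem_sdiff h₂.1 (Finset.mem_sdiff.mpr he₂)
    exact hmax f (Finset.mem_symmDiff.mpr (Or.inl (Finset.mem_sdiff.mp hf))) hef

/-- The stable b-matching of a finite weighted graph is unique. -/
theorem stable_bMatching_unique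
    (G : SimpleGraph V) (ω : Sym2 V → ℝ) (b : V → ℕ)
    (prec : Sym2 V → Sym2 V → Prop)
    (hω : ∀ e : Sym2 V, ¬ e.IsDiag → 0 < ω e)
    (hirr : ∀ e : Sym2 V, ¬ prec e e)
    (htrans : ∀ e f g : Sym2 V, prec e f → prec f g → prec e g)
    (htotal : ∀ e f : Sym2 V, ¬ e.IsDiag → ¬ f.IsDiag → e ≠ f → prec e f ∨ prec f e)
    (href : ∀ e f : Sym2 V, ¬ e.IsDiag → ¬ f.IsDiag → ω e < ω f → prec e f)
    (M₁ M₂ : Finset (Sym2 V))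
    (h₁ : IsStable G b prec M₁) (h₂ : IsStable G b prec M₂) :
    M₁ = M₂ :=
  stable_bMatching_unique_general G b prec hirr htrans M₁ M₂ h₁ h₂
end

section
/- A stable b-matching is a (1/2)-approximation of a maximum weight b-matching: if M is a stable b-matching of G, then for every b-matching M' of G we have ω(M') ≤ 2·ω(M), where ω(M) = Σ_{e ∈ M} ω(e). -/
/-!
Framework: finite simple graph `G` on vertex set `V`, positive edge weights `ω` on
unordered pairs of distinct vertices, capacities `b`, and a strict linear order
`prec` on unordered pairs of distinct vertices refining `ω`
(the paper's tie-breaking rule).  `M` is a set of edges.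
-/

variable {V : Type*} [Fintype V] [DecidableEq V]

lemma aux_sum_le_sum {α : Type*} [DecidableEq α] (S T : Finset α) (g : α → ℝ)
    (hcard : S.card ≤ T.card) (hle : ∀ a ∈ S, ∀ c ∈ T, g a ≤ g c)
    (hpos : ∀ c ∈ T, 0 ≤ g c) :
    ∑ a ∈ S, g a ≤ ∑ c ∈ T, g c := by
  rcases S.eq_empty_or_nonempty with h | hS
  · simp [h]; exact Finset.sum_nonneg hpos
  · have hT : T.Nonempty := Finset.card_pos.mp (lt_of_lt_of_le (Finset.card_pos.mpr hS) hcard)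
    set m := T.inf' hT g with hm
    have hm0 : 0 ≤ m := Finset.le_inf' hT g hpos
    calc ∑ a ∈ S, g a ≤ S.card • m :=
          Finset.sum_le_card_nsmul S g m (fun a ha => Finset.le_inf' hT g (hle a ha))
      _ ≤ T.card • m := by
          simp only [nsmul_eq_mul]
          exact mul_le_mul_of_nonneg_right (by exact_mod_cast hcard) hm0
      _ ≤ ∑ c ∈ T, g c := Finset.card_nsmul_le_sum T g m (fun c hc => Finset.inf'_le g hc)


/-- A stable b-matching is a (1/2)-approximation of a maximum weight
b-matching. -/
theorem stable_bMatching_half_approx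
    (G : SimpleGraph V) (ω : Sym2 V → ℝ) (b : V → ℕ)
    (prec : Sym2 V → Sym2 V → Prop)
    (hω : ∀ e : Sym2 V, ¬ e.IsDiag → 0 < ω e)
    (hirr : ∀ e : Sym2 V, ¬ prec e e)
    (htrans : ∀ e f g : Sym2 V, prec e f → prec f g → prec e g)
    (htotal : ∀ e f : Sym2 V, ¬ e.IsDiag → ¬ f.IsDiag → e ≠ f → prec e f ∨ prec f e)
    (href : ∀ e f : Sym2 V, ¬ e.IsDiag → ¬ f.IsDiag → ω e < ω f → prec e f)
    (M : Finset (Sym2 V)) (hM : IsStable G b prec M)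
    (M' : Finset (Sym2 V)) (hM' : IsBMatching G b M') :
    ∑ e ∈ M', ω e ≤ 2 * ∑ e ∈ M, ω e := by
  classical
  obtain ⟨⟨hMG, hMb⟩, hstab⟩ := hM
  obtain ⟨hM'G, hM'b⟩ := hM'
  -- nondiagonality
  have hndM : ∀ e ∈ M, ¬ e.IsDiag := fun e he => (G.not_isDiag_of_mem_edgeSet (hMG e he))
  have hndM' : ∀ e ∈ M', ¬ e.IsDiag := fun e he => (G.not_isDiag_of_mem_edgeSet (hM'G e he))
  have hMpos : ∀ e ∈ M, 0 ≤ ω e := fun e he => (hω e (hndM e he)).le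
  -- the charging function
  set P : Sym2 V → V → Prop :=
    fun e x => x ∈ e ∧ Saturated b M x ∧ ∀ f ∈ M, x ∈ f → prec e f with hP
  have hex : ∀ e ∈ M' \ M, ∃ x, P e x := by
    intro e he
    rw [Finset.mem_sdiff] at he
    obtain ⟨x, hx1, hx2⟩ := hstab e (hM'G e he.1) he.2
    exact ⟨x, hx1, hx2⟩
  set c : Sym2 V → V := fun e => if h : ∃ x, P e x then h.choose else e.out.1 with hc
  have hcP : ∀ e ∈ M' \ M, P e (c e) := by
    intro e he
    have h := hex e he
    simp only [hc, dif_pos h]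
    exact h.choose_spec
  -- key per-vertex bound
  have key : ∀ x : V,
      ∑ e ∈ (M' \ M).filter (fun e => c e = x), ω e ≤
      ∑ f ∈ (M \ M').filter (fun f => x ∈ f), ω f := by
    intro x
    set S := (M' \ M).filter (fun e => c e = x) with hS
    set T := (M \ M').filter (fun f => x ∈ f) with hT
    have hTpos : ∀ f ∈ T, 0 ≤ ω f := by
      intro f hf
      rw [hT, Finset.mem_filter, Finset.mem_sdiff] at hf
      exact hMpos f hf.1.1
    apply aux_sum_le_sum
    · -- cardinality
      rcases S.eq_empty_or_nonempty with h | ⟨e₀, he₀⟩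
      · simp [h]
      · rw [hS, Finset.mem_filter] at he₀
        have hPe₀ := hcP e₀ he₀.1
        rw [he₀.2] at hPe₀
        have hsat : bDeg M x = b x := hPe₀.2.1
        set A := M'.filter (fun e => x ∈ e) with hA
        set B := M.filter (fun e => x ∈ e) with hB
        have hSsub : S ⊆ A \ B := by
          intro e he
          rw [hS, Finset.mem_filter, Finset.mem_sdiff] at he
          have hxe : x ∈ e := by
            have := (hcP e (Finset.mem_sdiff.mpr he.1)).1
            rwa [he.2] at this
          rw [Finset.mem_sdiff, hA, hB, Finset.mem_filter, Finset.mem_filter]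
          exact ⟨⟨he.1.1, hxe⟩, fun h => he.1.2 h.1⟩
        have hTeq : T = B \ A := by
          rw [hT, hB, hA]
          ext f
          simp only [Finset.mem_filter, Finset.mem_sdiff]
          tauto
        have hAB : A.card ≤ B.card := by
          have : A.card = bDeg M' x := rfl
          have h2 : B.card = bDeg M x := rfl
          rw [this, h2, hsat]
          exact hM'b x
        have hinter : A ∩ B = B ∩ A := Finset.inter_comm A B
        have h1 : (A \ B).card + (A ∩ B).card = A.card := Finset.card_sdiff_add_card_inter A B
        have h2 : (B \ A).card + (B ∩ A).card = B.card := Finset.card_sdiff_add_card_inter B A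
        have h3 : (A ∩ B).card = (B ∩ A).card := by rw [hinter]
        have h4 : (A \ B).card ≤ (B \ A).card := by omega
        calc S.card ≤ (A \ B).card := Finset.card_le_card hSsub
          _ ≤ (B \ A).card := h4
          _ = T.card := by rw [hTeq]
    · -- weights
      intro e he f hf
      rw [hS, Finset.mem_filter] at he
      rw [hT, Finset.mem_filter, Finset.mem_sdiff] at hf
      have hPe := hcP e he.1
      rw [he.2] at hPe
      have hprec : prec e f := hPe.2.2 f hf.1.1 hf.2
      by_contra hlt
      push_neg at hlt
      have hnde : ¬ e.IsDiag := hndM' e (Finset.mem_sdiff.mp he.1).1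
      have hndf : ¬ f.IsDiag := hndM f hf.1.1
      
      exact hirr e (htrans e f e hprec (href f e hndf hnde hlt))
    · exact hTpos
  -- assemble
  have split : ∑ e ∈ M' ∩ M, ω e + ∑ e ∈ M' \ M, ω e = ∑ e ∈ M', ω e :=
    Finset.sum_inter_add_sum_sdiff M' M ω
  have fib : ∑ x : V, ∑ e ∈ (M' \ M).filter (fun e => c e = x), ω e = ∑ e ∈ M' \ M, ω e :=
    Finset.sum_fiberwise (M' \ M) c ω
  have card2 : ∀ f ∈ M \ M', (Finset.univ.filter (fun x => x ∈ f)).card = 2 := by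
    intro f hf
    have hnd := hndM f (Finset.mem_sdiff.mp hf).1
    induction f using Sym2.ind with
    | _ a a' =>
      have hab : a ≠ a' := fun h => hnd (Sym2.mk_isDiag_iff.mpr h)
      have hset : Finset.univ.filter (fun x => x ∈ s(a, a')) = {a, a'} := by
        ext x; simp [Sym2.mem_iff]
      rw [hset, Finset.card_insert_of_notMem (by simp [hab]), Finset.card_singleton]
  have double : ∑ x : V, ∑ f ∈ (M \ M').filter (fun f => x ∈ f), ω f
      = 2 * ∑ f ∈ M \ M', ω f := by
    calc ∑ x : V, ∑ f ∈ (M \ M').filter (fun f => x ∈ f), ω f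
        = ∑ x : V, ∑ f ∈ M \ M', if x ∈ f then ω f else 0 := by
          simp_rw [Finset.sum_filter]
      _ = ∑ f ∈ M \ M', ∑ x : V, if x ∈ f then ω f else 0 := Finset.sum_comm
      _ = ∑ f ∈ M \ M', 2 * ω f := by
          refine Finset.sum_congr rfl (fun f hf => ?_)
          rw [← Finset.sum_filter, Finset.sum_const, card2 f hf]
          simp [mul_comm]
      _ = 2 * ∑ f ∈ M \ M', ω f := (Finset.mul_sum _ _ _).symm
  have step1 : ∑ e ∈ M' \ M, ω e ≤ 2 * ∑ f ∈ M \ M', ω f := by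
    rw [← fib, ← double]
    exact Finset.sum_le_sum (fun x _ => key x)
  have step2 : ∑ e ∈ M' ∩ M, ω e ≤ ∑ e ∈ M ∩ M', ω e + ∑ e ∈ M ∩ M', ω e := by
    rw [Finset.inter_comm]
    have h0 : 0 ≤ ∑ e ∈ M ∩ M', ω e :=
      Finset.sum_nonneg (fun e he => hMpos e (Finset.mem_inter.mp he).1)
    linarith
  have final : 2 * ∑ e ∈ M, ω e
      = (∑ e ∈ M ∩ M', ω e + ∑ e ∈ M ∩ M', ω e) + 2 * ∑ f ∈ M \ M', ω f := by
    have := Finset.sum_inter_add_sum_sdiff M M' ω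
    linarith
  linarith
end

section
/- Removing the ≺-greatest edge reduces a stable b-matching to a stable matching with decremented capacities: let M be a stable b-matching of G, let e* = {u,v} be the ≺-greatest element of the edge set E, and assume b(u) ≥ 1 and b(v) ≥ 1. Then M \ {e*} is a stable b'-matching of the graph G − e* (the graph G with edge e* deleted), where b'(u) = b(u) − 1, b'(v) = b(v) − 1, and b'(x) = b(x) for all other vertices x. -/
/-!
Framework: finite simple graph `G` on vertex set `V`, positive edge weights `ω` on
unordered pairs of distinct vertices, capacities `b`, and a strict linear order
`prec` on unordered pairs of distinct vertices refining `ω`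
(the paper's tie-breaking rule).  `M` is a set of edges.
-/

variable {V : Type*} [Fintype V] [DecidableEq V]

/-- Removing the ≺-greatest edge reduces a stable b-matching to a
stable matching of the deleted graph with decremented capacities at its endpoints. -/
theorem stable_bMatching_delete_greatest
    (G : SimpleGraph V) (ω : Sym2 V → ℝ) (b : V → ℕ)
    (prec : Sym2 V → Sym2 V → Prop)
    (hω : ∀ e : Sym2 V, ¬ e.IsDiag → 0 < ω e)
    (hirr : ∀ e : Sym2 V, ¬ prec e e)
    (htrans : ∀ e f g : Sym2 V, prec e f → prec f g → prec e g)
    (htotal : ∀ e f : Sym2 V, ¬ e.IsDiag → ¬ f.IsDiag → e ≠ f → prec e f ∨ prec f e)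
    (href : ∀ e f : Sym2 V, ¬ e.IsDiag → ¬ f.IsDiag → ω e < ω f → prec e f)
    (M : Finset (Sym2 V)) (hM : IsStable G b prec M)
    (u v : V) (huv : G.Adj u v)
    (hgreatest : ∀ f ∈ G.edgeSet, f ≠ s(u, v) → prec f s(u, v))
    (hbu : 1 ≤ b u) (hbv : 1 ≤ b v) :
    IsStable (G.deleteEdges {s(u, v)})
      (fun x => if x = u ∨ x = v then b x - 1 else b x) prec
      (M.erase s(u, v)) := by

  classical
  obtain ⟨⟨hMsub, hMdeg⟩, hstab⟩ := hM
  have he0M : s(u, v) ∈ M := by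
    by_contra h
    obtain ⟨x, hxe, hsat, hbeat⟩ := hstab s(u, v) (G.mem_edgeSet.mpr huv) h
    have hxuv : x = u ∨ x = v := Sym2.mem_iff.mp hxe
    have hbx : 1 ≤ b x := by rcases hxuv with rfl | rfl <;> assumption
    have hs : bDeg M x = b x := hsat
    have hpos : 0 < bDeg M x := by omega
    obtain ⟨f, hf⟩ := Finset.card_pos.mp hpos
    have hfM : f ∈ M := (Finset.mem_filter.mp hf).1
    have hxf : x ∈ f := (Finset.mem_filter.mp hf).2
    have hfe : f ≠ s(u, v) := fun h' => h (h' ▸ hfM)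
    exact hirr s(u, v) (htrans _ _ _ (hbeat f hfM hxf) (hgreatest f (hMsub f hfM) hfe))
  have hfilter : ∀ x : V, (M.erase s(u, v)).filter (fun e => x ∈ e)
      = (M.filter (fun e => x ∈ e)).erase s(u, v) := fun x => Finset.filter_erase _ _ _
  have hdeg_mem : ∀ x : V, x ∈ s(u, v) → bDeg (M.erase s(u, v)) x = bDeg M x - 1 := by
    intro x hx
    unfold bDeg
    rw [hfilter, Finset.card_erase_of_mem (Finset.mem_filter.mpr ⟨he0M, hx⟩)]
  have hdeg_not : ∀ x : V, x ∉ s(u, v) → bDeg (M.erase s(u, v)) x = bDeg M x := by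
    intro x hx
    unfold bDeg
    have hnm : s(u, v) ∉ M.filter (fun e => x ∈ e) := fun h => hx (Finset.mem_filter.mp h).2
    rw [hfilter, Finset.erase_eq_of_notMem hnm]
  constructor
  · constructor
    · intro e he
      have heM : e ∈ M := Finset.mem_of_mem_erase he
      have hene : e ≠ s(u, v) := Finset.ne_of_mem_erase he
      rw [SimpleGraph.edgeSet_deleteEdges]
      exact ⟨hMsub e heM, by simpa using hene⟩
    · intro x
      by_cases hx : x = u ∨ x = v
      · have hxm : x ∈ s(u, v) := Sym2.mem_iff.mpr hx
        rw [hdeg_mem x hxm]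
        simp only [hx, if_true]
        exact Nat.sub_le_sub_right (hMdeg x) 1
      · have hxm : x ∉ s(u, v) := fun h => hx (Sym2.mem_iff.mp h)
        rw [hdeg_not x hxm]
        simp only [hx, if_false]
        exact hMdeg x
  · intro e he heM'
    rw [SimpleGraph.edgeSet_deleteEdges] at he
    obtain ⟨heG, hene⟩ := he
    have hene' : e ≠ s(u, v) := by simpa using hene
    have heM : e ∉ M := fun h => heM' (Finset.mem_erase.mpr ⟨hene', h⟩)
    obtain ⟨x, hxe, hsat, hbeat⟩ := hstab e heG heM
    refine ⟨x, hxe, ?_, fun f hf hxf => hbeat f (Finset.mem_of_mem_erase hf) hxf⟩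
    unfold Saturated at hsat ⊢
    by_cases hx : x = u ∨ x = v
    · have hxm : x ∈ s(u, v) := Sym2.mem_iff.mpr hx
      rw [hdeg_mem x hxm, hsat]
      simp [hx]
    · have hxm : x ∉ s(u, v) := fun h => hx (Sym2.mem_iff.mp h)
      rw [hdeg_not x hxm, hsat]
      simp [hx]
end

section
/- Membership criterion for an inserted edge (Lemma 1 of the paper): let M be a stable b-matching of G, let e = {u,v} be an unordered pair of distinct vertices with e ∉ E, let G̃ = G + e be the graph obtained by adding edge e, and let M̃ be a stable b-matching of G̃. Then e ∈ M̃ if and only if for each endpoint x ∈ {u,v}, either x is unsaturated in M, or there exists an edge f ∈ M incident to x with f ≺ e. (In the paper's notation: e ∈ M̃ ⟺ ω(u,v) > max{ω(u,S(u).min), ω(v,S(v).min)}.) -/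
/-!
Framework: finite simple graph `G` on vertex set `V`, positive edge weights `ω` on
unordered pairs of distinct vertices, capacities `b`, and a strict linear order
`prec` on unordered pairs of distinct vertices refining `ω`
(the paper's tie-breaking rule).  `M` is a set of edges.
-/

variable {V : Type*} [Fintype V] [DecidableEq V]

lemma exists_prec_max {α : Type*} [DecidableEq α] (prec : α → α → Prop)
    (hirr : ∀ e, ¬ prec e e)
    (htrans : ∀ a b c, prec a b → prec b c → prec a c)
    (T : Finset α) (hT : T.Nonempty) : ∃ g ∈ T, ∀ h ∈ T, ¬ prec g h := by
  classical
  induction T using Finset.induction_on with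
  | empty => simp at hT
  | @insert a s ha ih =>
    by_cases hs : s.Nonempty
    · obtain ⟨g, hg, hmax⟩ := ih hs
      by_cases hga : prec g a
      · refine ⟨a, Finset.mem_insert_self _ _, ?_⟩
        intro h hh hah
        rcases Finset.mem_insert.mp hh with rfl | hh
        · exact hirr _ hah
        · exact hmax h hh (htrans _ _ _ hga hah)
      · refine ⟨g, Finset.mem_insert_of_mem hg, ?_⟩
        intro h hh
        rcases Finset.mem_insert.mp hh with rfl | hh
        · exact hga
        · exact hmax h hh
    · have : s = ∅ := Finset.not_nonempty_iff_eq_empty.mp hs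
      subst this
      exact ⟨a, Finset.mem_insert_self _ _, by simpa using hirr a⟩

open Classical in
/-- Two stable b-matchings (of graphs agreeing above `e`) agree on edges above `e`. -/
lemma stable_filter_above_eq (b : V → ℕ) (prec : Sym2 V → Sym2 V → Prop)
    (hirr : ∀ e : Sym2 V, ¬ prec e e)
    (htrans : ∀ e f g : Sym2 V, prec e f → prec f g → prec e g)
    (G1 G2 : SimpleGraph V) (M1 M2 : Finset (Sym2 V)) (e : Sym2 V)
    (h1 : IsStable G1 b prec M1) (h2 : IsStable G2 b prec M2)
    (h12 : ∀ g ∈ M1, prec e g → g ∈ G2.edgeSet)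
    (h21 : ∀ g ∈ M2, prec e g → g ∈ G1.edgeSet) :
    M1.filter (fun f => prec e f) = M2.filter (fun f => prec e f) := by
  classical
  set S1 := M1.filter (fun f => prec e f) with hS1
  set S2 := M2.filter (fun f => prec e f) with hS2
  by_contra hne
  have hTne : ((S1 \ S2) ∪ (S2 \ S1)).Nonempty := by
    by_contra h
    rw [Finset.not_nonempty_iff_eq_empty, Finset.union_eq_empty,
      Finset.sdiff_eq_empty_iff_subset, Finset.sdiff_eq_empty_iff_subset] at h
    exact hne (Finset.Subset.antisymm h.1 h.2)
  obtain ⟨g, hgT, hgmax⟩ := exists_prec_max prec hirr htrans _ hTne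
  -- any edge strictly above g lies in S1 iff it lies in S2
  have habove : ∀ f, prec g f → (f ∈ S1 ↔ f ∈ S2) := by
    intro f hgf
    have hfT : f ∉ (S1 \ S2) ∪ (S2 \ S1) := fun hf => hgmax f hf hgf
    rw [Finset.mem_union, Finset.mem_sdiff, Finset.mem_sdiff] at hfT
    push_neg at hfT
    constructor
    · intro h; exact hfT.1 h
    · intro h; exact hfT.2 h
  rcases Finset.mem_union.mp hgT with hg | hg
  · -- g ∈ S1 \ S2 : use stability of M2
    rw [Finset.mem_sdiff] at hg
    obtain ⟨hgS1, hgS2⟩ := hg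
    rw [hS1, Finset.mem_filter] at hgS1
    obtain ⟨hgM1, hgeg⟩ := hgS1
    have hgM2 : g ∉ M2 := fun h => hgS2 (by rw [hS2, Finset.mem_filter]; exact ⟨h, hgeg⟩)
    obtain ⟨x, hxg, hxsat, hxall⟩ := h2.2 g (h12 g hgM1 hgeg) hgM2
    have hsub : M2.filter (fun f => x ∈ f) ⊆ M1.filter (fun f => x ∈ f) := by
      intro f hf
      rw [Finset.mem_filter] at hf ⊢
      have hgf : prec g f := hxall f hf.1 hf.2
      have hfS2 : f ∈ S2 := by
        rw [hS2, Finset.mem_filter]; exact ⟨hf.1, htrans _ _ _ hgeg hgf⟩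
      have hfS1 : f ∈ S1 := (habove f hgf).mpr hfS2
      rw [hS1, Finset.mem_filter] at hfS1
      exact ⟨hfS1.1, hf.2⟩
    have hssub : M2.filter (fun f => x ∈ f) ⊂ M1.filter (fun f => x ∈ f) := by
      refine ⟨hsub, fun hsub' => ?_⟩
      have : g ∈ M2.filter (fun f => x ∈ f) :=
        hsub' (by rw [Finset.mem_filter]; exact ⟨hgM1, hxg⟩)
      exact hgM2 (Finset.mem_filter.mp this).1
    have : b x < bDeg M1 x := by
      have := Finset.card_lt_card hssub
      unfold bDeg
      calc b x = bDeg M2 x := hxsat.symm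
        _ < (M1.filter (fun f => x ∈ f)).card := this
    exact absurd (h1.1.2 x) (not_le.mpr this)
  · -- g ∈ S2 \ S1 : use stability of M1
    rw [Finset.mem_sdiff] at hg
    obtain ⟨hgS2, hgS1⟩ := hg
    rw [hS2, Finset.mem_filter] at hgS2
    obtain ⟨hgM2, hgeg⟩ := hgS2
    have hgM1 : g ∉ M1 := fun h => hgS1 (by rw [hS1, Finset.mem_filter]; exact ⟨h, hgeg⟩)
    obtain ⟨x, hxg, hxsat, hxall⟩ := h1.2 g (h21 g hgM2 hgeg) hgM1
    have hsub : M1.filter (fun f => x ∈ f) ⊆ M2.filter (fun f => x ∈ f) := by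
      intro f hf
      rw [Finset.mem_filter] at hf ⊢
      have hgf : prec g f := hxall f hf.1 hf.2
      have hfS1 : f ∈ S1 := by
        rw [hS1, Finset.mem_filter]; exact ⟨hf.1, htrans _ _ _ hgeg hgf⟩
      have hfS2 : f ∈ S2 := (habove f hgf).mp hfS1
      rw [hS2, Finset.mem_filter] at hfS2
      exact ⟨hfS2.1, hf.2⟩
    have hssub : M1.filter (fun f => x ∈ f) ⊂ M2.filter (fun f => x ∈ f) := by
      refine ⟨hsub, fun hsub' => ?_⟩
      have : g ∈ M1.filter (fun f => x ∈ f) :=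
        hsub' (by rw [Finset.mem_filter]; exact ⟨hgM2, hxg⟩)
      exact hgM1 (Finset.mem_filter.mp this).1
    have : b x < bDeg M2 x := by
      have := Finset.card_lt_card hssub
      unfold bDeg
      calc b x = bDeg M1 x := hxsat.symm
        _ < (M2.filter (fun f => x ∈ f)).card := this
    exact absurd (h2.1.2 x) (not_le.mpr this)

/-- Lemma 1: membership criterion for an inserted edge. -/
theorem inserted_edge_mem_iff
    (G : SimpleGraph V) (ω : Sym2 V → ℝ) (b : V → ℕ)
    (prec : Sym2 V → Sym2 V → Prop)
    (hω : ∀ e : Sym2 V, ¬ e.IsDiag → 0 < ω e)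
    (hirr : ∀ e : Sym2 V, ¬ prec e e)
    (htrans : ∀ e f g : Sym2 V, prec e f → prec f g → prec e g)
    (htotal : ∀ e f : Sym2 V, ¬ e.IsDiag → ¬ f.IsDiag → e ≠ f → prec e f ∨ prec f e)
    (href : ∀ e f : Sym2 V, ¬ e.IsDiag → ¬ f.IsDiag → ω e < ω f → prec e f)
    (u v : V) (huv : u ≠ v) (hnotE : s(u, v) ∉ G.edgeSet)
    (M : Finset (Sym2 V)) (hM : IsStable G b prec M)
    (Mt : Finset (Sym2 V))
    (hMt : IsStable (G ⊔ SimpleGraph.fromEdgeSet {s(u, v)}) b prec Mt) :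
    s(u, v) ∈ Mt ↔
      ∀ x ∈ (s(u, v) : Sym2 V),
        ¬ Saturated b M x ∨ ∃ f ∈ M, x ∈ f ∧ prec f s(u, v) := by
  classical
  set e : Sym2 V := s(u, v) with he
  have hediag : ¬ e.IsDiag := by simp [he, huv]
  have heG' : e ∈ (G ⊔ SimpleGraph.fromEdgeSet {e}).edgeSet := by
    rw [SimpleGraph.edgeSet_sup, SimpleGraph.edgeSet_fromEdgeSet]
    right
    exact ⟨rfl, hediag⟩
  -- the agreement of the two matchings above e
  have hagree : M.filter (fun f => prec e f) = Mt.filter (fun f => prec e f) := by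
    apply stable_filter_above_eq b prec hirr htrans G
      (G ⊔ SimpleGraph.fromEdgeSet {e}) M Mt e hM hMt
    · intro g hg _
      rw [SimpleGraph.edgeSet_sup]
      exact Or.inl (hM.1.1 g hg)
    · intro g hg hpg
      have := hMt.1.1 g hg
      rw [SimpleGraph.edgeSet_sup, SimpleGraph.edgeSet_fromEdgeSet] at this
      rcases this with h | h
      · exact h
      · exact absurd hpg (by rw [h.1]; exact hirr e)
  have hagree' : ∀ x : V, M.filter (fun f => x ∈ f ∧ prec e f)
      = Mt.filter (fun f => x ∈ f ∧ prec e f) := by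
    intro x
    ext f
    have h1 : f ∈ M.filter (fun f => prec e f) ↔ f ∈ Mt.filter (fun f => prec e f) := by
      rw [hagree]
    simp only [Finset.mem_filter] at h1 ⊢
    tauto
  -- the criterion at x is equivalent to a counting condition
  have hcrit : ∀ x : V,
      ((¬ Saturated b M x ∨ ∃ f ∈ M, x ∈ f ∧ prec f e) ↔
        (M.filter (fun f => x ∈ f ∧ prec e f)).card < b x) := by
    intro x
    have hsub : M.filter (fun f => x ∈ f ∧ prec e f) ⊆ M.filter (fun f => x ∈ f) := by
      intro g hg
      rw [Finset.mem_filter] at hg ⊢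
      exact ⟨hg.1, hg.2.1⟩
    constructor
    · rintro (hns | ⟨f, hfM, hxf, hfe⟩)
      · have h1 : bDeg M x < b x := lt_of_le_of_ne (hM.1.2 x) hns
        exact lt_of_le_of_lt (Finset.card_le_card hsub) h1
      · have hfn : f ∉ M.filter (fun f => x ∈ f ∧ prec e f) := by
          rw [Finset.mem_filter]
          rintro ⟨-, -, hef⟩
          exact hirr f (htrans _ _ _ hfe hef)
        have hss : M.filter (fun f => x ∈ f ∧ prec e f) ⊂ M.filter (fun f => x ∈ f) := by
          refine ⟨hsub, fun h => hfn (h ?_)⟩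
          rw [Finset.mem_filter]; exact ⟨hfM, hxf⟩
        exact lt_of_lt_of_le (Finset.card_lt_card hss) (hM.1.2 x)
    · intro hlt
      by_cases hsat : Saturated b M x
      · right
        have hclt : (M.filter (fun f => x ∈ f ∧ prec e f)).card
            < (M.filter (fun f => x ∈ f)).card := by
          have : (M.filter (fun f => x ∈ f)).card = b x := hsat
          omega
        have hss : M.filter (fun f => x ∈ f ∧ prec e f) ⊂ M.filter (fun f => x ∈ f) :=
          ⟨hsub, fun h => absurd (Finset.card_le_card h) (not_le.mpr hclt)⟩
        obtain ⟨f, hfMx, hfA⟩ := Finset.exists_of_ssubset hss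
        rw [Finset.mem_filter] at hfMx
        obtain ⟨hfM, hxf⟩ := hfMx
        have hnef : ¬ prec e f := by
          intro hef
          exact hfA (Finset.mem_filter.mpr ⟨hfM, hxf, hef⟩)
        have hfG : f ∈ G.edgeSet := hM.1.1 f hfM
        have hfdiag : ¬ f.IsDiag := G.not_isDiag_of_mem_edgeSet hfG
        have hfe : f ≠ e := fun h => hnotE (h ▸ hfG)
        rcases htotal f e hfdiag hediag hfe with h | h
        · exact ⟨f, hfM, hxf, h⟩
        · exact absurd h hnef
      · exact Or.inl hsat
  -- now the main equivalence
  constructor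
  · intro heMt x hxe
    rw [hcrit x, hagree' x]
    have hsubt : Mt.filter (fun f => x ∈ f ∧ prec e f) ⊆ Mt.filter (fun f => x ∈ f) := by
      intro g hg
      rw [Finset.mem_filter] at hg ⊢
      exact ⟨hg.1, hg.2.1⟩
    have hen : e ∉ Mt.filter (fun f => x ∈ f ∧ prec e f) := by
      rw [Finset.mem_filter]
      rintro ⟨-, -, hee⟩
      exact hirr e hee
    have hss : Mt.filter (fun f => x ∈ f ∧ prec e f) ⊂ Mt.filter (fun f => x ∈ f) := by
      refine ⟨hsubt, fun h => hen (h ?_)⟩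
      rw [Finset.mem_filter]; exact ⟨heMt, hxe⟩
    exact lt_of_lt_of_le (Finset.card_lt_card hss) (hMt.1.2 x)
  · intro hall
    by_contra heMt
    obtain ⟨x, hxe, hxsat, hxall⟩ := hMt.2 e heG' heMt
    have hlt : (Mt.filter (fun f => x ∈ f ∧ prec e f)).card < b x := by
      rw [← hagree' x, ← hcrit x]
      exact hall x hxe
    have hsubx : Mt.filter (fun f => x ∈ f) ⊆ Mt.filter (fun f => x ∈ f ∧ prec e f) := by
      intro g hg
      rw [Finset.mem_filter] at hg ⊢
      exact ⟨hg.1, hg.2, hxall g hg.1 hg.2⟩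
    have : b x ≤ (Mt.filter (fun f => x ∈ f ∧ prec e f)).card := by
      calc b x = bDeg Mt x := hxsat.symm
        _ ≤ _ := Finset.card_le_card hsubx
    omega
end

section
/- Locality of changes under a single edge insertion (the content of Lemma 8 of the paper): let M be a stable b-matching of G, let e = {u,v} be an unordered pair of distinct vertices with e ∉ E, and let M̃ be a stable b-matching of the graph G + e. Then every vertex that is incident to an edge of the symmetric difference M △ M̃ is connected to u or to v by a path all of whose edges belong to M ∪ M̃. -/
/-!
Framework: finite simple graph `G` on vertex set `V`, positive edge weights `ω` on
unordered pairs of distinct vertices, capacities `b`, and a strict linear order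
`prec` on unordered pairs of distinct vertices refining `ω`
(the paper's tie-breaking rule).  `M` is a set of edges.
-/

variable {V : Type*} [Fintype V] [DecidableEq V]

/-!
Suppose the component `C` of `w` in the graph with edge set `M ∪ M̃` does not contain `u`, and
let `e` be the `prec`-largest edge of `M △ M̃` meeting `C`; both endpoints of `e` lie in `C`,
so `e ≠ s(u, v)` and `e` is an edge of `G`. Say `e ∈ M \ M̃` (the other case is symmetric).
Stability of `M̃` gives an endpoint `x` of `e`, saturated in `M̃`, all of whose `M̃`-edges beat
`e`. As `deg_M x ≤ b x = deg_M̃ x` and `e` is an `M`-edge at `x` missing from `M̃`, some `M̃`-edge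
`g` at `x` is missing from `M`. Then `g ∈ M △ M̃` meets `C` and beats `e`, contradicting
maximality.
-/

section

variable {α : Type*} [DecidableEq α]

lemma exists_mem_sdiff_of_bDeg_le {M N : Finset (Sym2 α)} {x : α} (hdeg : bDeg N x ≤ bDeg M x)
    {e : Sym2 α} (he : e ∈ N \ M) (hxe : x ∈ e) : ∃ g ∈ M \ N, x ∈ g := by
  by_contra! hMN
  have hsub : M.filter (x ∈ ·) ⊆ N.filter (x ∈ ·) := fun g hg => by
    rw [Finset.mem_filter] at hg ⊢
    exact ⟨by_contra fun hgN => hMN g (Finset.mem_sdiff.2 ⟨hg.1, hgN⟩) hg.2, hg.2⟩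
  have hssub : M.filter (x ∈ ·) ⊂ N.filter (x ∈ ·) :=
    (Finset.ssubset_iff_of_subset hsub).2
      ⟨e, Finset.mem_filter.2 ⟨(Finset.mem_sdiff.1 he).1, hxe⟩,
        fun h => (Finset.mem_sdiff.1 he).2 (Finset.mem_filter.1 h).1⟩
  exact (Finset.card_lt_card hssub).not_ge hdeg

lemma IsStable.exists_prec_mem_sdiff {H : SimpleGraph α} {b : α → ℕ}
    {prec : Sym2 α → Sym2 α → Prop} {M N : Finset (Sym2 α)} (hM : IsStable H b prec M)
    (hN : ∀ x, bDeg N x ≤ b x) {e : Sym2 α} (heH : e ∈ H.edgeSet) (he : e ∈ N \ M) :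
    ∃ x ∈ e, ∃ g ∈ M \ N, x ∈ g ∧ prec e g := by
  obtain ⟨x, hxe, hsat, hbeat⟩ := hM.2 e heH (Finset.mem_sdiff.1 he).2
  have hdeg : bDeg N x ≤ bDeg M x := hsat ▸ hN x
  obtain ⟨g, hg, hxg⟩ := exists_mem_sdiff_of_bDeg_le hdeg he hxe
  exact ⟨x, hxe, g, hg, hxg, hbeat g (Finset.mem_sdiff.1 hg).1 hxg⟩

lemma exists_prec_mem_symmDiff_of_insert {G : SimpleGraph α} {b : α → ℕ}
    {prec : Sym2 α → Sym2 α → Prop} {u v : α} {M Mt : Finset (Sym2 α)}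
    (hM : IsStable G b prec M)
    (hMt : IsStable (G ⊔ SimpleGraph.fromEdgeSet {s(u, v)}) b prec Mt)
    {e : Sym2 α} (he : e ∈ (M \ Mt) ∪ (Mt \ M)) (heuv : e ≠ s(u, v)) :
    ∃ x ∈ e, ∃ g ∈ (M \ Mt) ∪ (Mt \ M), x ∈ g ∧ prec e g := by
  rcases Finset.mem_union.1 he with he | he
  · have heG : e ∈ G.edgeSet := hM.1.1 e (Finset.mem_sdiff.1 he).1
    obtain ⟨x, hxe, g, hg, hxg, hprec⟩ :=
      hMt.exists_prec_mem_sdiff hM.1.2 (by simp [SimpleGraph.edgeSet_sup, heG]) he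
    exact ⟨x, hxe, g, Finset.mem_union_right _ hg, hxg, hprec⟩
  · have heG : e ∈ G.edgeSet := by
      have := hMt.1.1 e (Finset.mem_sdiff.1 he).1
      simpa [SimpleGraph.edgeSet_sup, heuv] using this
    obtain ⟨x, hxe, g, hg, hxg, hprec⟩ := hM.exists_prec_mem_sdiff hMt.1.2 heG he
    exact ⟨x, hxe, g, Finset.mem_union_left _ hg, hxg, hprec⟩

end

lemma reflTransGen_of_mem_of_mem {α : Type*} {F : Set (Sym2 α)} {w x y : α} {e : Sym2 α}
    (he : e ∈ F) (hx : x ∈ e) (hy : y ∈ e)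
    (hwx : Relation.ReflTransGen (fun a c => s(a, c) ∈ F) w x) :
    Relation.ReflTransGen (fun a c => s(a, c) ∈ F) w y := by
  induction e using Sym2.ind with
  | _ a c =>
    rcases Sym2.mem_iff.1 hx with rfl | rfl <;> rcases Sym2.mem_iff.1 hy with rfl | rfl
    · exact hwx
    · exact hwx.tail he
    · exact hwx.tail (Sym2.eq_swap ▸ he)
    · exact hwx

theorem insertion_locality_general
    (G : SimpleGraph V) (b : V → ℕ)
    (prec : Sym2 V → Sym2 V → Prop)
    (hirr : ∀ e : Sym2 V, ¬ prec e e)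
    (htrans : ∀ e f g : Sym2 V, prec e f → prec f g → prec e g)
    (u v : V)
    (M : Finset (Sym2 V)) (hM : IsStable G b prec M)
    (Mt : Finset (Sym2 V))
    (hMt : IsStable (G ⊔ SimpleGraph.fromEdgeSet {s(u, v)}) b prec Mt) :
    ∀ w : V, (∃ f ∈ (M \ Mt) ∪ (Mt \ M), w ∈ f) →
      Relation.ReflTransGen (fun a c => s(a, c) ∈ M ∪ Mt) w u ∨
        Relation.ReflTransGen (fun a c => s(a, c) ∈ M ∪ Mt) w v := by
  intro w ⟨f, hf, hwf⟩
  left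
  by_contra hwu
  set R := Relation.ReflTransGen (fun a c : V => s(a, c) ∈ M ∪ Mt)
  set S : Set (Sym2 V) := {g | g ∈ (M \ Mt) ∪ (Mt \ M) ∧ ∃ x ∈ g, R w x}
  have : IsTrans (Sym2 V) (flip prec) := ⟨fun e f g hef hfg => htrans g f e hfg hef⟩
  have : Std.Irrefl (flip prec) := ⟨hirr⟩
  obtain ⟨e, ⟨he, x, hxe, hwx⟩, hmax⟩ :=
    (Finite.wellFounded_of_trans_of_irrefl (flip prec)).has_min S ⟨f, hf, w, hwf, .refl⟩
  have heU : e ∈ M ∪ Mt := by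
    rcases Finset.mem_union.1 he with h | h <;> simp [(Finset.mem_sdiff.1 h).1]
  have hreach : ∀ y ∈ e, R w y := fun y hy => reflTransGen_of_mem_of_mem heU hxe hy hwx
  have heuv : e ≠ s(u, v) := fun h => hwu (hreach u (h ▸ Sym2.mem_mk_left u v))
  obtain ⟨y, hye, g, hg, hyg, hprec⟩ := exists_prec_mem_symmDiff_of_insert hM hMt he heuv
  exact hmax g ⟨hg, y, hyg, hreach y hye⟩ hprec

/-- Lemma 8: locality of changes under a single edge insertion:
every vertex incident to an edge of the symmetric difference of the old and new
stable matchings is connected to an endpoint of the inserted edge by a path whose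
edges all lie in the union of the two matchings. -/
theorem insertion_locality
    (G : SimpleGraph V) (ω : Sym2 V → ℝ) (b : V → ℕ)
    (prec : Sym2 V → Sym2 V → Prop)
    (hω : ∀ e : Sym2 V, ¬ e.IsDiag → 0 < ω e)
    (hirr : ∀ e : Sym2 V, ¬ prec e e)
    (htrans : ∀ e f g : Sym2 V, prec e f → prec f g → prec e g)
    (htotal : ∀ e f : Sym2 V, ¬ e.IsDiag → ¬ f.IsDiag → e ≠ f → prec e f ∨ prec f e)
    (href : ∀ e f : Sym2 V, ¬ e.IsDiag → ¬ f.IsDiag → ω e < ω f → prec e f)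
    (u v : V) (huv : u ≠ v) (hnotE : s(u, v) ∉ G.edgeSet)
    (M : Finset (Sym2 V)) (hM : IsStable G b prec M)
    (Mt : Finset (Sym2 V))
    (hMt : IsStable (G ⊔ SimpleGraph.fromEdgeSet {s(u, v)}) b prec Mt) :
    ∀ w : V, (∃ f ∈ (M \ Mt) ∪ (Mt \ M), w ∈ f) →
      Relation.ReflTransGen (fun a c => s(a, c) ∈ M ∪ Mt) w u ∨
        Relation.ReflTransGen (fun a c => s(a, c) ∈ M ∪ Mt) w v :=
  insertion_locality_general G b prec hirr htrans u v M hM Mt hMt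
end

section
/- Locality of changes under a single edge removal (the content of Lemma 13 of the paper): let M be a stable b-matching of G, let e = {u,v} ∈ M, and let M̃ be a stable b-matching of the graph G − e (obtained by deleting edge e). Then every vertex that is incident to an edge of the symmetric difference M △ M̃ is connected to u or to v by a path all of whose edges belong to M ∪ M̃. -/
/-!
Framework: finite simple graph `G` on vertex set `V`, positive edge weights `ω` on
unordered pairs of distinct vertices, capacities `b`, and a strict linear order
`prec` on unordered pairs of distinct vertices refining `ω`
(the paper's tie-breaking rule).  `M` is a set of edges.
-/

variable {V : Type*} [Fintype V] [DecidableEq V]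

lemma aux_exists_max {α : Type*} (r : α → α → Prop)
    (hirr : ∀ a, ¬ r a a) (htrans : ∀ a b c, r a b → r b c → r a c)
    (s : Finset α) (hs : s.Nonempty) : ∃ a ∈ s, ∀ b ∈ s, ¬ r a b := by
  classical
  induction s using Finset.induction_on with
  | empty => exact absurd hs (by simp)
  | @insert x t hxt ih =>
    rcases t.eq_empty_or_nonempty with rfl | ht
    · exact ⟨x, by simp, by simpa using hirr x⟩
    · obtain ⟨a, ha, hmax⟩ := ih ht
      by_cases hax : r a x
      · refine ⟨x, Finset.mem_insert_self _ _, ?_⟩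
        intro b hb hxb
        rcases Finset.mem_insert.mp hb with rfl | hb
        · exact hirr b hxb
        · exact hmax b hb (htrans a x b hax hxb)
      · refine ⟨a, Finset.mem_insert_of_mem ha, ?_⟩
        intro b hb hab
        rcases Finset.mem_insert.mp hb with rfl | hb
        · exact hax hab
        · exact hmax b hb hab

lemma aux_card {α : Type*} [DecidableEq α] {A B : Finset α} {e : α}
    (heA : e ∈ A) (heB : e ∉ B) (h : A.card ≤ B.card) : ∃ f ∈ B, f ∉ A := by
  by_contra h'
  push_neg at h'
  have hsub : B ⊆ A.erase e := fun f hf =>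
    Finset.mem_erase.mpr ⟨fun hfe => heB (hfe ▸ hf), h' f hf⟩
  have h1 := Finset.card_le_card hsub
  have h2 := Finset.card_erase_of_mem heA
  have h3 : 0 < A.card := Finset.card_pos.mpr ⟨e, heA⟩
  omega

/-- Lemma 13: locality of changes under a single edge removal:
every vertex incident to an edge of the symmetric difference of the old and new
stable matchings is connected to an endpoint of the removed edge by a path whose
edges all lie in the union of the two matchings. -/
theorem removal_locality
    (G : SimpleGraph V) (ω : Sym2 V → ℝ) (b : V → ℕ)
    (prec : Sym2 V → Sym2 V → Prop)
    (hω : ∀ e : Sym2 V, ¬ e.IsDiag → 0 < ω e)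
    (hirr : ∀ e : Sym2 V, ¬ prec e e)
    (htrans : ∀ e f g : Sym2 V, prec e f → prec f g → prec e g)
    (htotal : ∀ e f : Sym2 V, ¬ e.IsDiag → ¬ f.IsDiag → e ≠ f → prec e f ∨ prec f e)
    (href : ∀ e f : Sym2 V, ¬ e.IsDiag → ¬ f.IsDiag → ω e < ω f → prec e f)
    (M : Finset (Sym2 V)) (hM : IsStable G b prec M)
    (u v : V) (huv : G.Adj u v) (heM : s(u, v) ∈ M)
    (Mt : Finset (Sym2 V))
    (hMt : IsStable (G.deleteEdges {s(u, v)}) b prec Mt) :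
    ∀ w : V, (∃ f ∈ (M \ Mt) ∪ (Mt \ M), w ∈ f) →
      Relation.ReflTransGen (fun a c => s(a, c) ∈ M ∪ Mt) w u ∨
        Relation.ReflTransGen (fun a c => s(a, c) ∈ M ∪ Mt) w v := by
  classical
  set R : V → V → Prop := fun a c => s(a, c) ∈ M ∪ Mt with hR
  set Bad : V → Prop := fun x =>
    ¬ Relation.ReflTransGen R x u ∧ ¬ Relation.ReflTransGen R x v with hBad
  -- propagation of badness along edges of the union
  have bothBad : ∀ e ∈ M ∪ Mt, ∀ x ∈ e, ∀ y ∈ e, Bad x → Bad y := by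
    intro e he x hx y hy hbx
    by_cases hxy : x = y
    · exact hxy ▸ hbx
    · have hexy : e = s(x, y) := (Sym2.mem_and_mem_iff hxy).mp ⟨hx, hy⟩
      have hRxy : R x y := by
        show s(x, y) ∈ M ∪ Mt
        rw [← hexy]; exact he
      constructor
      · intro hyu; exact hbx.1 (Relation.ReflTransGen.head hRxy hyu)
      · intro hyv; exact hbx.2 (Relation.ReflTransGen.head hRxy hyv)
  intro w ⟨f, hf, hwf⟩
  by_contra hcon
  push_neg at hcon
  have hwBad : Bad w := ⟨hcon.1, hcon.2⟩
  -- the set of symmetric-difference edges with a bad endpoint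
  set DS : Finset (Sym2 V) :=
    ((M \ Mt) ∪ (Mt \ M)).filter (fun e => ∃ x ∈ e, Bad x) with hDS
  have hDSne : DS.Nonempty := ⟨f, Finset.mem_filter.mpr ⟨hf, w, hwf, hwBad⟩⟩
  obtain ⟨e₀, he₀, hmax⟩ := aux_exists_max prec hirr htrans DS hDSne
  obtain ⟨he₀D, x₀, hx₀e, hx₀bad⟩ := Finset.mem_filter.mp he₀
  have he₀U : e₀ ∈ M ∪ Mt := by
    rcases Finset.mem_union.mp he₀D with h | h
    · exact Finset.mem_union_left _ (Finset.mem_sdiff.mp h).1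
    · exact Finset.mem_union_right _ (Finset.mem_sdiff.mp h).1
  have hallBad : ∀ y ∈ e₀, Bad y := fun y hy => bothBad e₀ he₀U x₀ hx₀e y hy hx₀bad
  have hnotuv : e₀ ≠ s(u, v) := by
    intro h
    have : Bad u := hallBad u (h ▸ Sym2.mem_mk_left u v)
    exact this.1 Relation.ReflTransGen.refl
  rcases Finset.mem_union.mp he₀D with hcase | hcase
  · -- e₀ ∈ M \ Mt : use stability of Mt
    obtain ⟨he₀M, he₀nMt⟩ := Finset.mem_sdiff.mp hcase
    have he₀G : e₀ ∈ G.edgeSet := hM.1.1 e₀ he₀M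
    have he₀G' : e₀ ∈ (G.deleteEdges {s(u, v)}).edgeSet := by
      rw [SimpleGraph.edgeSet_deleteEdges]
      exact ⟨he₀G, by simpa using hnotuv⟩
    obtain ⟨x, hxe, hsat, hbeats⟩ := hMt.2 e₀ he₀G' he₀nMt
    have hxbad : Bad x := hallBad x hxe
    have hA : e₀ ∈ M.filter (fun e => x ∈ e) := Finset.mem_filter.mpr ⟨he₀M, hxe⟩
    have hB : e₀ ∉ Mt.filter (fun e => x ∈ e) := fun h => he₀nMt (Finset.mem_filter.mp h).1
    have hcard : (M.filter (fun e => x ∈ e)).card ≤ (Mt.filter (fun e => x ∈ e)).card := by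
      have h1 := hM.1.2 x
      have h2 : bDeg Mt x = b x := hsat
      unfold bDeg at h1 h2
      omega
    obtain ⟨g, hgB, hgA⟩ := aux_card hA hB hcard
    obtain ⟨hgMt, hxg⟩ := Finset.mem_filter.mp hgB
    have hgnM : g ∉ M := fun h => hgA (Finset.mem_filter.mpr ⟨h, hxg⟩)
    have hgDS : g ∈ DS := Finset.mem_filter.mpr
      ⟨Finset.mem_union_right _ (Finset.mem_sdiff.mpr ⟨hgMt, hgnM⟩), x, hxg, hxbad⟩
    exact hmax g hgDS (hbeats g hgMt hxg)
  · -- e₀ ∈ Mt \ M : use stability of M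
    obtain ⟨he₀Mt, he₀nM⟩ := Finset.mem_sdiff.mp hcase
    have he₀G : e₀ ∈ G.edgeSet := by
      have := hMt.1.1 e₀ he₀Mt
      rw [SimpleGraph.edgeSet_deleteEdges] at this
      exact this.1
    obtain ⟨x, hxe, hsat, hbeats⟩ := hM.2 e₀ he₀G he₀nM
    have hxbad : Bad x := hallBad x hxe
    have hA : e₀ ∈ Mt.filter (fun e => x ∈ e) := Finset.mem_filter.mpr ⟨he₀Mt, hxe⟩
    have hB : e₀ ∉ M.filter (fun e => x ∈ e) := fun h => he₀nM (Finset.mem_filter.mp h).1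
    have hcard : (Mt.filter (fun e => x ∈ e)).card ≤ (M.filter (fun e => x ∈ e)).card := by
      have h1 := hMt.1.2 x
      have h2 : bDeg M x = b x := hsat
      unfold bDeg at h1 h2
      omega
    obtain ⟨g, hgB, hgA⟩ := aux_card hA hB hcard
    obtain ⟨hgM, hxg⟩ := Finset.mem_filter.mp hgB
    have hgnMt : g ∉ Mt := fun h => hgA (Finset.mem_filter.mpr ⟨h, hxg⟩)
    have hgDS : g ∈ DS := Finset.mem_filter.mpr
      ⟨Finset.mem_union_left _ (Finset.mem_sdiff.mpr ⟨hgM, hgnMt⟩), x, hxg, hxbad⟩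
    exact hmax g hgDS (hbeats g hgM hxg)
end

section
/- Weight-alternation structure of the change under edge insertion (the content of Lemmas 2–4 of the paper): let M be a stable b-matching of G, let e = {u,v} be an unordered pair of distinct vertices with e ∉ E, and let M̃ be a stable b-matching of the graph G + e. Then (i) every edge f ∈ M \ M̃ shares an endpoint with some edge g ∈ M̃ \ M satisfying f ≺ g, and (ii) every edge g ∈ M̃ \ M with g ≠ e shares an endpoint with some edge f ∈ M \ M̃ satisfying g ≺ f. -/
/-!
Framework: finite simple graph `G` on vertex set `V`, positive edge weights `ω` on
unordered pairs of distinct vertices, capacities `b`, and a strict linear order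
`prec` on unordered pairs of distinct vertices refining `ω`
(the paper's tie-breaking rule).  `M` is a set of edges.
-/

variable {V : Type*} [Fintype V] [DecidableEq V]

/-! An edge `f` of a b-matching that is missing from a stable b-matching `M'` is rejected by
`M'` at a saturated endpoint `x` all of whose `M'`-edges beat `f`. As `x` carries `b x` edges
of `M'` but at most `b x` of the other matching, `f` among them, some `M'`-edge at `x` is new,
and it beats `f`. Applied to `M̃` (stable in `G + e`, which contains the edges of `M`) this
gives (i); applied to `M` it gives (ii), since every new edge other than `e` lies in `G`. -/

theorem SimpleGraph.mem_edgeSet_of_mem_edgeSet_sup_fromEdgeSet_singleton {α : Type*}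
    {G : SimpleGraph α} {e f : Sym2 α} (hf : f ∈ (G ⊔ SimpleGraph.fromEdgeSet {e}).edgeSet)
    (hfe : f ≠ e) :
    f ∈ G.edgeSet := by
  simp_all [SimpleGraph.edgeSet_sup, SimpleGraph.edgeSet_fromEdgeSet]

section

variable {α : Type*} [DecidableEq α]

theorem exists_mem_sdiff_of_bDeg_le_s14 {A B : Finset (Sym2 α)} {x : α} {f : Sym2 α}
    (hf : f ∈ A \ B) (hxf : x ∈ f) (hdeg : bDeg A x ≤ bDeg B x) :
    ∃ g ∈ B \ A, x ∈ g := by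
  by_contra! hB
  have hsub : B.filter (x ∈ ·) ⊆ A.filter (x ∈ ·) := by
    intro g hg
    rw [Finset.mem_filter] at hg ⊢
    by_contra hgA
    exact hB g (Finset.mem_sdiff.2 ⟨hg.1, fun h => hgA ⟨h, hg.2⟩⟩) hg.2
  have hf' : f ∈ A.filter (x ∈ ·) \ B.filter (x ∈ ·) := by
    simp only [Finset.mem_sdiff, Finset.mem_filter] at hf ⊢
    tauto
  have hlt : bDeg B x < bDeg A x :=
    Finset.card_lt_card ((Finset.ssubset_iff_of_subset hsub).2 ⟨f, Finset.mem_sdiff.1 hf'⟩)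
  omega

theorem IsStable.exists_displacing_edge {H : SimpleGraph α} {b : α → ℕ}
    {prec : Sym2 α → Sym2 α → Prop} {M M' : Finset (Sym2 α)} (hM' : IsStable H b prec M')
    (hM : ∀ x, bDeg M x ≤ b x) {f : Sym2 α} (hf : f ∈ M \ M') (hfH : f ∈ H.edgeSet) :
    ∃ g ∈ M' \ M, (∃ x, x ∈ f ∧ x ∈ g) ∧ prec f g := by
  obtain ⟨x, hxf, hsat, hbeats⟩ := hM'.2 f hfH (Finset.mem_sdiff.1 hf).2
  obtain ⟨g, hg, hxg⟩ := exists_mem_sdiff_of_bDeg_le_s14 hf hxf (hsat ▸ hM x)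
  exact ⟨g, hg, ⟨x, hxf, hxg⟩, hbeats g (Finset.mem_sdiff.1 hg).1 hxg⟩

end

theorem insertion_alternation_general
    (G : SimpleGraph V) (b : V → ℕ)
    (prec : Sym2 V → Sym2 V → Prop)
    (u v : V)
    (M : Finset (Sym2 V)) (hM : IsStable G b prec M)
    (Mt : Finset (Sym2 V))
    (hMt : IsStable (G ⊔ SimpleGraph.fromEdgeSet {s(u, v)}) b prec Mt) :
    (∀ f ∈ M \ Mt, ∃ g ∈ Mt \ M, (∃ x, x ∈ f ∧ x ∈ g) ∧ prec f g) ∧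
      (∀ g ∈ Mt \ M, g ≠ s(u, v) →
        ∃ f ∈ M \ Mt, (∃ x, x ∈ g ∧ x ∈ f) ∧ prec g f) := by
  refine ⟨fun f hf => hMt.exists_displacing_edge hM.1.2 hf ?_, fun g hg hgne => ?_⟩
  · rw [SimpleGraph.edgeSet_sup]
    exact Or.inl (hM.1.1 f (Finset.mem_sdiff.1 hf).1)
  · refine hM.exists_displacing_edge hMt.1.2 hg ?_
    exact SimpleGraph.mem_edgeSet_of_mem_edgeSet_sup_fromEdgeSet_singleton
      (hMt.1.1 g (Finset.mem_sdiff.1 hg).1) hgne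

/-- Lemmas 2-4, insertion case: weight-alternation structure of the
change under edge insertion. -/
theorem insertion_alternation
    (G : SimpleGraph V) (ω : Sym2 V → ℝ) (b : V → ℕ)
    (prec : Sym2 V → Sym2 V → Prop)
    (hω : ∀ e : Sym2 V, ¬ e.IsDiag → 0 < ω e)
    (hirr : ∀ e : Sym2 V, ¬ prec e e)
    (htrans : ∀ e f g : Sym2 V, prec e f → prec f g → prec e g)
    (htotal : ∀ e f : Sym2 V, ¬ e.IsDiag → ¬ f.IsDiag → e ≠ f → prec e f ∨ prec f e)
    (href : ∀ e f : Sym2 V, ¬ e.IsDiag → ¬ f.IsDiag → ω e < ω f → prec e f)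
    (u v : V) (huv : u ≠ v) (hnotE : s(u, v) ∉ G.edgeSet)
    (M : Finset (Sym2 V)) (hM : IsStable G b prec M)
    (Mt : Finset (Sym2 V))
    (hMt : IsStable (G ⊔ SimpleGraph.fromEdgeSet {s(u, v)}) b prec Mt) :
    (∀ f ∈ M \ Mt, ∃ g ∈ Mt \ M, (∃ x, x ∈ f ∧ x ∈ g) ∧ prec f g) ∧
      (∀ g ∈ Mt \ M, g ≠ s(u, v) →
        ∃ f ∈ M \ Mt, (∃ x, x ∈ g ∧ x ∈ f) ∧ prec g f) :=
  insertion_alternation_general G b prec u v M hM Mt hMt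
end

section
/- Weight-alternation structure of the change under edge removal (the content of Lemmas 2–4 of the paper, removal case): let M be a stable b-matching of G, let e = {u,v} ∈ M, and let M̃ be a stable b-matching of the graph G − e (obtained by deleting edge e). Then (i) every edge f ∈ M \ M̃ with f ≠ e shares an endpoint with some edge g ∈ M̃ \ M satisfying f ≺ g, and (ii) every edge g ∈ M̃ \ M shares an endpoint with some edge f ∈ M \ M̃ satisfying g ≺ f. -/
/-!
Framework: finite simple graph `G` on vertex set `V`, positive edge weights `ω` on
unordered pairs of distinct vertices, capacities `b`, and a strict linear order
`prec` on unordered pairs of distinct vertices refining `ω`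
(the paper's tie-breaking rule).  `M` is a set of edges.
-/

variable {V : Type*} [Fintype V] [DecidableEq V]

/-!
Both halves are one local exchange argument. Take an edge `f` of one stable b-matching `B`
that is missing from another, `A`. Stability of `A` gives an endpoint `x` of `f` that is
saturated in `A` with every `A`-edge at `x` beating `f`. If all `A`-edges at `x` were also in
`B`, then `B` would have `f` besides them at `x`, i.e. more than `b x` edges there. So some
`A`-edge `g ∉ B` meets `f` at `x`, and `f ≺ g`. Apply this with `(A, B) = (M̃, M)` in `G - e`
(where every `f ≠ e` of `M` is an edge) and with `(A, B) = (M, M̃)` in `G`.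
-/

lemma exists_mem_sdiff_of_saturated {α : Type*} [DecidableEq α] {b : α → ℕ}
    {A B : Finset (Sym2 α)} {x : α} {f : Sym2 α}
    (hA : Saturated b A x) (hB : bDeg B x ≤ b x) (hfB : f ∈ B) (hfA : f ∉ A) (hxf : x ∈ f) :
    ∃ g ∈ A \ B, x ∈ g := by
  by_contra! hcon
  have hsub : A.filter (x ∈ ·) ⊆ B.filter (x ∈ ·) := by
    intro g hg
    rw [Finset.mem_filter] at hg ⊢
    by_contra hgB
    exact hcon g (Finset.mem_sdiff.mpr ⟨hg.1, fun h => hgB ⟨h, hg.2⟩⟩) hg.2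
  have hssub : A.filter (x ∈ ·) ⊂ B.filter (x ∈ ·) :=
    (Finset.ssubset_iff_of_subset hsub).mpr
      ⟨f, Finset.mem_filter.mpr ⟨hfB, hxf⟩, fun h => hfA (Finset.mem_filter.mp h).1⟩
  exact ((Finset.card_lt_card hssub).trans_le hB).ne hA

lemma IsStable.exists_sdiff_beating {α : Type*} [DecidableEq α] {H : SimpleGraph α}
    {b : α → ℕ} {prec : Sym2 α → Sym2 α → Prop} {A B : Finset (Sym2 α)}
    (hA : IsStable H b prec A) (hB : ∀ x, bDeg B x ≤ b x) {f : Sym2 α} (hfH : f ∈ H.edgeSet)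
    (hfB : f ∈ B) (hfA : f ∉ A) :
    ∃ g ∈ A \ B, (∃ x, x ∈ f ∧ x ∈ g) ∧ prec f g := by
  obtain ⟨x, hxf, hsat, hbeat⟩ := hA.2 f hfH hfA
  obtain ⟨g, hg, hxg⟩ := exists_mem_sdiff_of_saturated hsat (hB x) hfB hfA hxf
  exact ⟨g, hg, ⟨x, hxf, hxg⟩, hbeat g (Finset.mem_sdiff.mp hg).1 hxg⟩

theorem removal_alternation_general
    (G : SimpleGraph V) (b : V → ℕ)
    (prec : Sym2 V → Sym2 V → Prop)
    (M : Finset (Sym2 V)) (hM : IsStable G b prec M)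
    (u v : V)
    (Mt : Finset (Sym2 V))
    (hMt : IsStable (G.deleteEdges {s(u, v)}) b prec Mt) :
    (∀ f ∈ M \ Mt, f ≠ s(u, v) →
        ∃ g ∈ Mt \ M, (∃ x, x ∈ f ∧ x ∈ g) ∧ prec f g) ∧
      (∀ g ∈ Mt \ M, ∃ f ∈ M \ Mt, (∃ x, x ∈ g ∧ x ∈ f) ∧ prec g f) := by
  constructor
  · intro f hf hfe
    obtain ⟨hfM, hfMt⟩ := Finset.mem_sdiff.mp hf
    have hfH : f ∈ (G.deleteEdges {s(u, v)}).edgeSet := by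
      rw [SimpleGraph.edgeSet_deleteEdges]
      exact ⟨hM.1.1 f hfM, hfe⟩
    exact hMt.exists_sdiff_beating hM.1.2 hfH hfM hfMt
  · intro g hg
    obtain ⟨hgMt, hgM⟩ := Finset.mem_sdiff.mp hg
    have hgG : g ∈ G.edgeSet :=
      SimpleGraph.edgeSet_mono (G.deleteEdges_le _) (hMt.1.1 g hgMt)
    exact hM.exists_sdiff_beating hMt.1.2 hgG hgMt hgM

/-- Lemmas 2-4, removal case: weight-alternation structure of the
change under edge removal. -/
theorem removal_alternation
    (G : SimpleGraph V) (ω : Sym2 V → ℝ) (b : V → ℕ)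
    (prec : Sym2 V → Sym2 V → Prop)
    (hω : ∀ e : Sym2 V, ¬ e.IsDiag → 0 < ω e)
    (hirr : ∀ e : Sym2 V, ¬ prec e e)
    (htrans : ∀ e f g : Sym2 V, prec e f → prec f g → prec e g)
    (htotal : ∀ e f : Sym2 V, ¬ e.IsDiag → ¬ f.IsDiag → e ≠ f → prec e f ∨ prec f e)
    (href : ∀ e f : Sym2 V, ¬ e.IsDiag → ¬ f.IsDiag → ω e < ω f → prec e f)
    (M : Finset (Sym2 V)) (hM : IsStable G b prec M)
    (u v : V) (huv : G.Adj u v) (heM : s(u, v) ∈ M)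
    (Mt : Finset (Sym2 V))
    (hMt : IsStable (G.deleteEdges {s(u, v)}) b prec Mt) :
    (∀ f ∈ M \ Mt, f ≠ s(u, v) →
        ∃ g ∈ Mt \ M, (∃ x, x ∈ f ∧ x ∈ g) ∧ prec f g) ∧
      (∀ g ∈ Mt \ M, ∃ f ∈ M \ Mt, (∃ x, x ∈ g ∧ x ∈ f) ∧ prec g f) :=
  removal_alternation_general G b prec M hM u v Mt hMt
end
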